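/- arXiv:1704.00586 — 6 statements merged into one kernel-verified Lean document; each statement's English description precedes it below -/
import Mathlib

section
/- The norm ‖f‖ := ‖f‖_∞ + BV_p(f) makes the space of bounded p-variation functions on an interval a Banach algebra: ‖fg‖_{BV_p} ≤ ‖f‖_{BV_p} · ‖g‖_{BV_p}. -/
open Set

/-- The set of `p`-variations of `f` along finite increasing partitions with points in `Ω`. -/
def pVarSet (p : ℝ) (f : ℝ → ℝ) (Ω : Set ℝ) : Set ℝ :=
  {r : ℝ | ∃ n : ℕ, ∃ x : Fin (n + 1) → ℝ, StrictMono x ∧ (∀ i, x i ∈ Ω) ∧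
    r = (∑ j : Fin n, |f (x j.succ) - f (x j.castSucc)| ^ p) ^ (1 / p)}

/-- The total `p`-variation of `f` on `Ω`. -/
noncomputable def BVp (p : ℝ) (f : ℝ → ℝ) (Ω : Set ℝ) : ℝ := sSup (pVarSet p f Ω)

/-- The sup norm of `f` on `Ω`. -/
noncomputable def supNOn (f : ℝ → ℝ) (Ω : Set ℝ) : ℝ := sSup ((fun x => |f x|) '' Ω)

/-- The bounded `p`-variation norm `‖f‖_∞ + BV_p(f)`. -/
noncomputable def bvpNorm (p : ℝ) (f : ℝ → ℝ) (Ω : Set ℝ) : ℝ := supNOn f Ω + BVp p f Ω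

lemma zero_mem_pVarSet {p : ℝ} (hp : 0 < p) (f : ℝ → ℝ) {Ω : Set ℝ} (hne : Ω.Nonempty) :
    (0 : ℝ) ∈ pVarSet p f Ω := by
  obtain ⟨a, ha⟩ := hne
  refine ⟨0, fun _ => a, ?_, fun _ => ha, ?_⟩
  · intro i j hij
    exact absurd hij (by omega)
  · rw [Finset.univ_eq_empty, Finset.sum_empty, Real.zero_rpow (one_div_ne_zero hp.ne')]

/-- the norm `‖f‖_∞ + BV_p(f)` makes the bounded `p`-variation functions on an
interval a Banach algebra: `‖fg‖_{BV_p} ≤ ‖f‖_{BV_p}·‖g‖_{BV_p}`. -/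
theorem bvp_norm_banach_algebra (p : ℝ) (hp : 1 ≤ p)
    (Ω : Set ℝ) (hne : Ω.Nonempty) (hΩ : Ω.OrdConnected)
    (f g : ℝ → ℝ)
    (hfb : BddAbove ((fun x => |f x|) '' Ω)) (hgb : BddAbove ((fun x => |g x|) '' Ω))
    (hfv : BddAbove (pVarSet p f Ω)) (hgv : BddAbove (pVarSet p g Ω)) :
    bvpNorm p (fun x => f x * g x) Ω ≤ bvpNorm p f Ω * bvpNorm p g Ω := by
  have hp0 : (0 : ℝ) < p := lt_of_lt_of_le one_pos hp
  set Sf := supNOn f Ω with hSf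
  set Sg := supNOn g Ω with hSg
  set Vf := BVp p f Ω with hVf
  set Vg := BVp p g Ω with hVg
  -- bounds and nonnegativity
  have hfle : ∀ x ∈ Ω, |f x| ≤ Sf := fun x hx => le_csSup hfb ⟨x, hx, rfl⟩
  have hgle : ∀ x ∈ Ω, |g x| ≤ Sg := fun x hx => le_csSup hgb ⟨x, hx, rfl⟩
  obtain ⟨a, ha⟩ := hne
  have hSf0 : 0 ≤ Sf := le_trans (abs_nonneg _) (hfle a ha)
  have hSg0 : 0 ≤ Sg := le_trans (abs_nonneg _) (hgle a ha)
  have hVf0 : 0 ≤ Vf := le_csSup hfv (zero_mem_pVarSet hp0 f ⟨a, ha⟩)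
  have hVg0 : 0 ≤ Vg := le_csSup hgv (zero_mem_pVarSet hp0 g ⟨a, ha⟩)
  -- sup norm of product
  have h1 : supNOn (fun x => f x * g x) Ω ≤ Sf * Sg := by
    apply csSup_le ((Set.Nonempty.image _ ⟨a, ha⟩))
    rintro r ⟨x, hx, rfl⟩
    show |f x * g x| ≤ Sf * Sg
    rw [abs_mul]
    exact mul_le_mul (hfle x hx) (hgle x hx) (abs_nonneg _) hSf0
  -- variation of product
  have h2 : BVp p (fun x => f x * g x) Ω ≤ Sf * Vg + Sg * Vf := by
    apply csSup_le ⟨0, zero_mem_pVarSet hp0 _ ⟨a, ha⟩⟩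
    rintro r ⟨n, x, hmono, hmem, rfl⟩
    set A : Fin n → ℝ := fun j => |f (x j.succ) - f (x j.castSucc)| with hA
    set B : Fin n → ℝ := fun j => |g (x j.succ) - g (x j.castSucc)| with hB
    have hptwise : ∀ j : Fin n,
        |f (x j.succ) * g (x j.succ) - f (x j.castSucc) * g (x j.castSucc)|
          ≤ Sf * B j + Sg * A j := by
      intro j
      have key : f (x j.succ) * g (x j.succ) - f (x j.castSucc) * g (x j.castSucc)
          = f (x j.succ) * (g (x j.succ) - g (x j.castSucc))
            + g (x j.castSucc) * (f (x j.succ) - f (x j.castSucc)) := by ring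
      rw [key]
      calc _ ≤ |f (x j.succ) * (g (x j.succ) - g (x j.castSucc))|
              + |g (x j.castSucc) * (f (x j.succ) - f (x j.castSucc))| := abs_add_le _ _
        _ ≤ Sf * B j + Sg * A j := by
            rw [abs_mul, abs_mul]
            exact add_le_add
              (mul_le_mul_of_nonneg_right (hfle _ (hmem _)) (abs_nonneg _))
              (mul_le_mul_of_nonneg_right (hgle _ (hmem _)) (abs_nonneg _))
    have hAB0 : ∀ j : Fin n, 0 ≤ Sf * B j + Sg * A j := fun j =>
      add_nonneg (mul_nonneg hSf0 (abs_nonneg _)) (mul_nonneg hSg0 (abs_nonneg _))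
    have step1 : (∑ j : Fin n,
          |f (x j.succ) * g (x j.succ) - f (x j.castSucc) * g (x j.castSucc)| ^ p) ^ (1 / p)
        ≤ (∑ j : Fin n, |Sf * B j + Sg * A j| ^ p) ^ (1 / p) := by
      apply Real.rpow_le_rpow
      · exact Finset.sum_nonneg fun j _ => Real.rpow_nonneg (abs_nonneg _) p
      · apply Finset.sum_le_sum
        intro j _
        apply Real.rpow_le_rpow (abs_nonneg _) _ hp0.le
        rw [abs_of_nonneg (hAB0 j)]
        exact hptwise j
      · positivity
    have step2 : (∑ j : Fin n, |Sf * B j + Sg * A j| ^ p) ^ (1 / p)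
        ≤ (∑ j : Fin n, |Sf * B j| ^ p) ^ (1 / p) + (∑ j : Fin n, |Sg * A j| ^ p) ^ (1 / p) :=
      Real.Lp_add_le Finset.univ (fun j => Sf * B j) (fun j => Sg * A j) hp
    have pull : ∀ (c : ℝ), 0 ≤ c → ∀ C : Fin n → ℝ, (∀ j, 0 ≤ C j) →
        (∑ j : Fin n, |c * C j| ^ p) ^ (1 / p) = c * (∑ j : Fin n, C j ^ p) ^ (1 / p) := by
      intro c hc C hC
      have : ∀ j : Fin n, |c * C j| ^ p = c ^ p * C j ^ p := by
        intro j
        rw [abs_of_nonneg (mul_nonneg hc (hC j)), Real.mul_rpow hc (hC j)]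
      simp_rw [this, ← Finset.mul_sum]
      rw [Real.mul_rpow (Real.rpow_nonneg hc p)
        (Finset.sum_nonneg fun j _ => Real.rpow_nonneg (hC j) p),
        ← Real.rpow_mul hc, mul_one_div_cancel hp0.ne', Real.rpow_one]
    have eq1 : (∑ j : Fin n, |Sf * B j| ^ p) ^ (1 / p) = Sf * (∑ j : Fin n, B j ^ p) ^ (1 / p) :=
      pull Sf hSf0 B (fun j => abs_nonneg _)
    have eq2 : (∑ j : Fin n, |Sg * A j| ^ p) ^ (1 / p) = Sg * (∑ j : Fin n, A j ^ p) ^ (1 / p) :=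
      pull Sg hSg0 A (fun j => abs_nonneg _)
    have hgmem : (∑ j : Fin n, B j ^ p) ^ (1 / p) ∈ pVarSet p g Ω := ⟨n, x, hmono, hmem, rfl⟩
    have hfmem : (∑ j : Fin n, A j ^ p) ^ (1 / p) ∈ pVarSet p f Ω := ⟨n, x, hmono, hmem, rfl⟩
    have hVg' : (∑ j : Fin n, B j ^ p) ^ (1 / p) ≤ Vg := le_csSup hgv hgmem
    have hVf' : (∑ j : Fin n, A j ^ p) ^ (1 / p) ≤ Vf := le_csSup hfv hfmem
    calc (∑ j : Fin n,
          |f (x j.succ) * g (x j.succ) - f (x j.castSucc) * g (x j.castSucc)| ^ p) ^ (1 / p)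
        ≤ (∑ j : Fin n, |Sf * B j| ^ p) ^ (1 / p) + (∑ j : Fin n, |Sg * A j| ^ p) ^ (1 / p) :=
          le_trans step1 step2
      _ = Sf * (∑ j : Fin n, B j ^ p) ^ (1 / p) + Sg * (∑ j : Fin n, A j ^ p) ^ (1 / p) := by
          rw [eq1, eq2]
      _ ≤ Sf * Vg + Sg * Vf :=
          add_le_add (mul_le_mul_of_nonneg_left hVg' hSf0) (mul_le_mul_of_nonneg_left hVf' hSg0)
  calc bvpNorm p (fun x => f x * g x) Ω ≤ Sf * Sg + (Sf * Vg + Sg * Vf) := add_le_add h1 h2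
    _ ≤ bvpNorm p f Ω * bvpNorm p g Ω := by
        show _ ≤ (Sf + Vf) * (Sg + Vg)
        nlinarith [mul_nonneg hVf0 hVg0]
end

section
/- (Doeblin-Fortet/Lasota-Yorke spectral gap lemma) Let X be a space of bounded measurable functions on Ω with norm ‖f‖ = ‖f‖_∞ + V(f) where V is a seminorm. Assume there is D > 0 such that for every probability measure μ on Ω and every f ∈ X with μ(f) = 0 one has ‖f‖_∞ ≤ D·V(f). Let L₀ be a bounded operator on X with ‖L₀f‖_∞ ≤ ‖f‖_∞ and V(L₀f) ≤ θ·V(f) for some θ ∈ (0,1) and all f, and suppose L₀* μ₀ = μ₀ for some probability measure μ₀. Then the restriction of L₀ to ker μ₀ has operator norm at most (D+1)θ/(Dθ+1) < 1; equivalently, L₀ has a spectral gap of size δ₀ = (1-θ)/(1+Dθ) with constant 1. -/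
open Set MeasureTheory

/-- Doeblin–Fortet / Lasota–Yorke spectral gap lemma. With `‖f‖ = ‖f‖_∞ + V(f)`,
if `‖f‖_∞ ≤ D·V(f)` whenever `μ(f) = 0` for a probability measure `μ`, if `L₀` contracts the
sup norm and satisfies `V(L₀ f) ≤ θ·V(f)`, and `L₀* μ₀ = μ₀`, then on `ker μ₀` all iterates
satisfy `‖L₀ⁿ f‖ ≤ ((D+1)θ/(Dθ+1))ⁿ ‖f‖`, i.e. there is a spectral gap of size
`(1-θ)/(1+Dθ)` with constant 1. -/
theorem doeblin_fortet_spectral_gap {Ω : Type*} [MeasurableSpace Ω]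
    (V : (Ω → ℝ) → ℝ) (hV0 : ∀ f, 0 ≤ V f)
    (memX : (Ω → ℝ) → Prop)
    (hmemX : ∀ f, memX f ↔ Measurable f ∧ BddAbove (Set.range fun x => |f x|))
    (D θ : ℝ) (hD : 0 < D) (hθ : θ ∈ Set.Ioo (0:ℝ) 1)
    (hDbound : ∀ μ : Measure Ω, IsProbabilityMeasure μ →
      ∀ f, memX f → (∫ x, f x ∂μ) = 0 → ∀ x, |f x| ≤ D * V f)
    (L : (Ω → ℝ) →ₗ[ℝ] (Ω → ℝ))
    (hLX : ∀ f, memX f → memX (L f))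
    (hLsup : ∀ f, memX f → ∀ x, |L f x| ≤ sSup (Set.range fun y => |f y|))
    (hLV : ∀ f, memX f → V (L f) ≤ θ * V f)
    (μ₀ : Measure Ω) [IsProbabilityMeasure μ₀]
    (hfix : ∀ f, memX f → (∫ x, L f x ∂μ₀) = ∫ x, f x ∂μ₀) :
    ∀ f, memX f → (∫ x, f x ∂μ₀) = 0 → ∀ n : ℕ,
      sSup (Set.range fun x => |(L ^ n) f x|) + V ((L ^ n) f) ≤
        ((D + 1) * θ / (D * θ + 1)) ^ n * (sSup (Set.range fun x => |f x|) + V f) := by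
  obtain ⟨hθ0, hθ1⟩ := hθ
  have hΩ : Nonempty Ω := by
    by_contra h
    have hE : IsEmpty Ω := not_nonempty_iff.mp h
    have h1 : μ₀ Set.univ = 1 := measure_univ
    rw [Set.univ_eq_empty_iff.mpr hE] at h1
    simp at h1
  have hc : (0:ℝ) < D * θ + 1 := by positivity
  intro f hf hf0 n
  -- first, membership and zero integral of all iterates
  have key : ∀ m : ℕ, memX ((L ^ m) f) ∧ (∫ x, (L ^ m) f x ∂μ₀) = 0 := by
    intro m
    induction m with
    | zero => simpa using ⟨hf, hf0⟩
    | succ m ih =>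
      have hstep : (L ^ (m + 1)) f = L ((L ^ m) f) := by
        rw [pow_succ']; rfl
      refine ⟨?_, ?_⟩
      · rw [hstep]; exact hLX _ ih.1
      · rw [hstep, hfix _ ih.1]; exact ih.2
  induction n with
  | zero => simp
  | succ n ih =>
    obtain ⟨hg, hg0⟩ := key n
    have hstep : (L ^ (n + 1)) f = L ((L ^ n) f) := by
      rw [pow_succ']; rfl
    set g := (L ^ n) f with hgdef
    have hBg : BddAbove (Set.range fun x => |g x|) := ((hmemX g).mp hg).2
    have hgL : memX (L g) := hLX g hg
    have hBLg : BddAbove (Set.range fun x => |L g x|) := ((hmemX _).mp hgL).2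
    have hLg0 : (∫ x, L g x ∂μ₀) = 0 := by rw [hfix g hg]; exact hg0
    -- abbreviations
    set a := sSup (Set.range fun x => |g x|) with hadef
    set a' := sSup (Set.range fun x => |L g x|) with ha'def
    set b := V g with hbdef
    set b' := V (L g) with hb'def
    have hb0 : 0 ≤ b := hV0 g
    have hb'0 : 0 ≤ b' := hV0 (L g)
    have ha0 : 0 ≤ a := by
      obtain ⟨x₀⟩ := hΩ
      exact (abs_nonneg (g x₀)).trans (le_csSup hBg ⟨x₀, rfl⟩)
    have hS1 : a' ≤ a := by
      refine csSup_le (Set.range_nonempty _) ?_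
      rintro _ ⟨x, rfl⟩
      exact hLsup g hg x
    have hVb : b' ≤ θ * b := hLV g hg
    have hS2 : a' ≤ D * b' := by
      refine csSup_le (Set.range_nonempty _) ?_
      rintro _ ⟨x, rfl⟩
      exact hDbound μ₀ inferInstance (L g) hgL hLg0 x
    have hS2' : a' ≤ D * θ * b := by
      calc a' ≤ D * b' := hS2
        _ ≤ D * (θ * b) := by
            exact mul_le_mul_of_nonneg_left hVb hD.le
        _ = D * θ * b := by ring
    -- one-step contraction
    have hone : a' + b' ≤ (D + 1) * θ / (D * θ + 1) * (a + b) := by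
      rw [div_mul_eq_mul_div, le_div_iff₀ hc]
      nlinarith [mul_le_mul_of_nonneg_left hS1 (show (0:ℝ) ≤ D * θ + θ by positivity),
        mul_le_mul_of_nonneg_left hS2' (sub_nonneg.mpr hθ1.le),
        mul_le_mul_of_nonneg_left hVb hc.le]
    have hρ0 : (0:ℝ) ≤ (D + 1) * θ / (D * θ + 1) := by positivity
    calc sSup (Set.range fun x => |(L ^ (n+1)) f x|) + V ((L ^ (n+1)) f)
        = a' + b' := by rw [hstep]
      _ ≤ (D + 1) * θ / (D * θ + 1) * (a + b) := hone
      _ ≤ (D + 1) * θ / (D * θ + 1) *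
            (((D + 1) * θ / (D * θ + 1)) ^ n * (sSup (Set.range fun x => |f x|) + V f)) :=
          mul_le_mul_of_nonneg_left ih hρ0
      _ = ((D + 1) * θ / (D * θ + 1)) ^ (n + 1) * (sSup (Set.range fun x => |f x|) + V f) := by
          ring
end

section
/- Let X be a space of bounded measurable functions on Ω with norm ‖f‖ = ‖f‖_∞ + V(f), where V is a seminorm invariant under adding constants (V(f + c) = V(f)). Assume there is D > 0 such that for every probability measure μ and every f with μ(f) = 0 one has ‖f‖_∞ ≤ D·V(f). Then for any probability measure μ, the operator π : X → X defined by πf = f - μ(f)·1 satisfies ‖π‖ ≤ (2D+2)/(D+2). -/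
open Set MeasureTheory

/-! Put `g = f - μ(f)`. Then `V g = V f`, and `‖g‖_∞` is bounded both by `D V(f)`
(the hypothesis, since `μ(g) = 0`) and by `2 ‖f‖_∞` (as `|μ(f)| ≤ ‖f‖_∞`). Weighting
these two bounds by `1` and `D + 1` gives `(D + 2) ‖g‖_∞ ≤ (2D + 2) ‖f‖_∞ + D V(f)`,
which rearranges to the claim. -/

lemma add_le_two_mul_add_two_div_mul {D S a v : ℝ} (hD : 0 < D) (hSv : S ≤ D * v)
    (hSa : S ≤ 2 * a) : S + v ≤ (2 * D + 2) / (D + 2) * (a + v) := by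
  rw [div_mul_eq_mul_div, le_div_iff₀ (by linarith)]
  nlinarith [mul_le_mul_of_nonneg_left hSa (by linarith : 0 ≤ D + 1)]

section Centering

variable {Ω : Type*} [MeasurableSpace Ω] {μ : Measure Ω} {f : Ω → ℝ}

lemma integral_sub_integral_eq_zero [IsProbabilityMeasure μ] (hf : Integrable f μ) :
    ∫ x, f x - ∫ y, f y ∂μ ∂μ = 0 := by
  rw [integral_sub hf (integrable_const _), integral_const, probReal_univ, one_smul, sub_self]

lemma abs_sub_integral_le_two_mul [IsProbabilityMeasure μ] {a : ℝ} (hfa : ∀ x, |f x| ≤ a)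
    (x : Ω) : |f x - ∫ y, f y ∂μ| ≤ 2 * a := by
  have hint : |∫ y, f y ∂μ| ≤ a := by
    simpa using norm_integral_le_of_norm_le_const (μ := μ) (f := f)
      (ae_of_all _ fun x ↦ by simpa using hfa x)
  linarith [abs_sub (f x) (∫ y, f y ∂μ), hfa x]

end Centering

theorem centering_projection_norm_general {Ω : Type*} [MeasurableSpace Ω]
    (V : (Ω → ℝ) → ℝ)
    (hVc : ∀ (f : Ω → ℝ) (c : ℝ), V (fun x => f x + c) = V f)
    (memX : (Ω → ℝ) → Prop)
    (hmemX : ∀ f, memX f ↔ Measurable f ∧ BddAbove (Set.range fun x => |f x|))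
    (D : ℝ) (hD : 0 < D)
    (hDbound : ∀ μ : Measure Ω, IsProbabilityMeasure μ →
      ∀ f, memX f → (∫ x, f x ∂μ) = 0 → ∀ x, |f x| ≤ D * V f)
    (μ : Measure Ω) [IsProbabilityMeasure μ] :
    ∀ f, memX f →
      sSup (Set.range fun x => |f x - ∫ y, f y ∂μ|) + V (fun x => f x - ∫ y, f y ∂μ) ≤
        (2 * D + 2) / (D + 2) * (sSup (Set.range fun x => |f x|) + V f) := by
  intro f hf
  have : Nonempty Ω := nonempty_of_isProbabilityMeasure μ
  obtain ⟨hfm, hfbdd⟩ := (hmemX f).1 hf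
  have hfa (x : Ω) : |f x| ≤ sSup (range fun x => |f x|) := le_csSup hfbdd (mem_range_self x)
  have hg2a := abs_sub_integral_le_two_mul (μ := μ) hfa
  have hVg : V (fun x => f x - ∫ y, f y ∂μ) = V f := by
    simpa only [sub_eq_add_neg] using hVc f (-∫ y, f y ∂μ)
  have hgX : memX (fun x => f x - ∫ y, f y ∂μ) :=
    (hmemX _).2 ⟨hfm.sub_const _, ⟨_, forall_mem_range.2 hg2a⟩⟩
  have hfint : Integrable f μ := .of_bound hfm.aestronglyMeasurable _
    (ae_of_all _ fun x ↦ by simpa using hfa x)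
  have hgD := hDbound μ ‹_› _ hgX (integral_sub_integral_eq_zero hfint)
  rw [hVg] at hgD ⊢
  exact add_le_two_mul_add_two_div_mul hD (csSup_le (range_nonempty _) (forall_mem_range.2 hgD))
    (csSup_le (range_nonempty _) (forall_mem_range.2 hg2a))

/-- with `‖f‖ = ‖f‖_∞ + V(f)`, `V` invariant under adding constants, and
`‖f‖_∞ ≤ D·V(f)` whenever `μ(f) = 0`, the centering projection `π f = f - μ(f)·1` satisfies
`‖π‖ ≤ (2D+2)/(D+2)`. -/
theorem centering_projection_norm {Ω : Type*} [MeasurableSpace Ω]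
    (V : (Ω → ℝ) → ℝ) (hV0 : ∀ f, 0 ≤ V f)
    (hVc : ∀ (f : Ω → ℝ) (c : ℝ), V (fun x => f x + c) = V f)
    (memX : (Ω → ℝ) → Prop)
    (hmemX : ∀ f, memX f ↔ Measurable f ∧ BddAbove (Set.range fun x => |f x|))
    (D : ℝ) (hD : 0 < D)
    (hDbound : ∀ μ : Measure Ω, IsProbabilityMeasure μ →
      ∀ f, memX f → (∫ x, f x ∂μ) = 0 → ∀ x, |f x| ≤ D * V f)
    (μ : Measure Ω) [IsProbabilityMeasure μ] :
    ∀ f, memX f →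
      sSup (Set.range fun x => |f x - ∫ y, f y ∂μ|) + V (fun x => f x - ∫ y, f y ∂μ) ≤
        (2 * D + 2) / (D + 2) * (sSup (Set.range fun x => |f x|) + V f) :=
  centering_projection_norm_general V hVc memX hmemX D hD hDbound μ
end

section
/- Under the hypotheses of class H(α,θ) on a compact space Ω, the transfer operator L₀ of the zero potential has a spectral gap on Hol_α(Ω) (with norm ‖f‖_∞ + (diam Ω)^α Hol_α(f)) of size (1-θ)/(1+θ) with constant 1: for every f with μ₀(f) = 0, ‖L₀ⁿf‖ ≤ ((2θ)/(1+θ))ⁿ ‖f‖, where μ₀ is the unique L₀*-fixed probability measure. -/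
/-!
`L₀` averages over the branches, so it does not increase the sup norm, and matching the branches
at `y` and `z` by the permutation from `H(α,θ)` shows that it contracts `Hol_α` by `θ`. As `μ₀` is
`L₀*`-fixed, `L₀` preserves mean zero, and a mean-zero function changes sign, so also
`‖L₀ f‖_∞ ≤ (diam Ω)^α Hol_α(L₀ f) ≤ θ (diam Ω)^α Hol_α(f)`. Playing the two bounds on `‖L₀ f‖_∞`
against each other gives `‖L₀ f‖ ≤ 2θ/(1+θ) ‖f‖`, and the claim follows by iteration.
-/

open Set MeasureTheory

noncomputable def holSemi {Ω : Type*} [MetricSpace Ω] (α : ℝ) (f : Ω → ℝ) : ℝ :=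
  sSup {r : ℝ | ∃ x y : Ω, x ≠ y ∧ r = |f x - f y| / dist x y ^ α}

noncomputable def supN {Ω : Type*} (f : Ω → ℝ) : ℝ :=
  sSup (Set.range fun x => |f x|)

/-- The homogeneous Hölder norm `‖f‖_∞ + (diam Ω)^α · Hol_α(f)`. -/
noncomputable def holNorm {Ω : Type*} [MetricSpace Ω] (α : ℝ) (f : Ω → ℝ) : ℝ :=
  supN f + Metric.diam (Set.univ : Set Ω) ^ α * holSemi α f

open Filter Topology

section Holder

variable {Ω : Type*} [MetricSpace Ω] {α C : ℝ} {f : Ω → ℝ}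

def holderQuotients (α : ℝ) (f : Ω → ℝ) : Set ℝ :=
  {r | ∃ x y : Ω, x ≠ y ∧ r = |f x - f y| / dist x y ^ α}

lemma holSemi_nonneg : 0 ≤ holSemi α f :=
  Real.sSup_nonneg <| by
    rintro r ⟨x, y, -, rfl⟩
    positivity

lemma abs_sub_le_holSemi_mul (hf : BddAbove (holderQuotients α f)) (x y : Ω) :
    |f x - f y| ≤ holSemi α f * dist x y ^ α := by
  obtain rfl | hxy := eq_or_ne x y
  · rw [sub_self, abs_zero]
    exact mul_nonneg holSemi_nonneg (Real.rpow_nonneg dist_nonneg α)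
  · rw [← div_le_iff₀ (Real.rpow_pos_of_pos (dist_pos.2 hxy) α)]
    exact le_csSup hf ⟨x, y, hxy, rfl⟩

lemma mem_upperBounds_holderQuotients (h : ∀ x y, |f x - f y| ≤ C * dist x y ^ α) :
    C ∈ upperBounds (holderQuotients α f) := by
  rintro r ⟨x, y, hxy, rfl⟩
  rw [div_le_iff₀ (Real.rpow_pos_of_pos (dist_pos.2 hxy) α)]
  exact h x y

lemma continuous_of_abs_sub_le (hα : 0 < α) (h : ∀ x y, |f x - f y| ≤ C * dist x y ^ α) :
    Continuous f := by
  refine continuous_iff_continuousAt.2 fun x => tendsto_iff_dist_tendsto_zero.2 ?_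
  have hlim : Tendsto (fun y => C * dist y x ^ α) (𝓝 x) (𝓝 0) := by
    have : Continuous fun y => C * dist y x ^ α :=
      continuous_const.mul ((continuous_id.dist continuous_const).rpow_const fun _ => Or.inr hα.le)
    simpa [Real.zero_rpow hα.ne'] using this.tendsto x
  exact squeeze_zero (fun _ => dist_nonneg) (fun y => h y x) hlim

end Holder

section Sup

variable {Ω : Type*} {C : ℝ} {f : Ω → ℝ}

lemma supN_nonneg : 0 ≤ supN f :=
  Real.sSup_nonneg <| by
    rintro r ⟨x, rfl⟩
    exact abs_nonneg _

lemma supN_le (hC : 0 ≤ C) (h : ∀ x, |f x| ≤ C) : supN f ≤ C :=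
  Real.sSup_le (by rintro r ⟨x, rfl⟩; exact h x) hC

lemma abs_le_supN [TopologicalSpace Ω] [CompactSpace Ω] (hf : Continuous f) (x : Ω) :
    |f x| ≤ supN f :=
  le_csSup (isCompact_range hf.abs).bddAbove ⟨x, rfl⟩

end Sup

section MeanZero

variable {Ω : Type*} [MetricSpace Ω] [CompactSpace Ω] [MeasurableSpace Ω]
  [OpensMeasurableSpace Ω] {μ : Measure Ω} [IsProbabilityMeasure μ] {α : ℝ} {f : Ω → ℝ}

structure IsMeanZeroHolder (μ : Measure Ω) (α : ℝ) (f : Ω → ℝ) : Prop where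
  continuous : Continuous f
  bddAbove : BddAbove (holderQuotients α f)
  integral_eq_zero : ∫ x, f x ∂μ = 0

/-- A function of mean zero changes sign, so its values are bounded by its oscillation. -/
lemma IsMeanZeroHolder.supN_le_diam_rpow_mul_holSemi (hf : IsMeanZeroHolder μ α f)
    (hα : 0 ≤ α) :
    supN f ≤ Metric.diam (univ : Set Ω) ^ α * holSemi α f := by
  have hint : Integrable f μ := hf.continuous.integrable_of_hasCompactSupport (.of_compactSpace f)
  obtain ⟨p, hp⟩ := exists_le_integral hint
  obtain ⟨q, hq⟩ := exists_integral_le hint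
  rw [hf.integral_eq_zero] at hp hq
  have hosc : ∀ x y, |f x - f y| ≤ Metric.diam (univ : Set Ω) ^ α * holSemi α f := fun x y =>
    calc |f x - f y| ≤ holSemi α f * dist x y ^ α := abs_sub_le_holSemi_mul hf.bddAbove x y
      _ ≤ holSemi α f * Metric.diam (univ : Set Ω) ^ α := by
        have := Metric.dist_le_diam_of_mem isCompact_univ.isBounded (mem_univ x) (mem_univ y)
        gcongr
        exact holSemi_nonneg
      _ = _ := mul_comm _ _
  refine supN_le (mul_nonneg (Real.rpow_nonneg Metric.diam_nonneg α) holSemi_nonneg) fun x => ?_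
  have := hosc x p
  have := hosc x q
  rw [abs_le] at *
  constructor <;> linarith

end MeanZero

section TransferOperator

variable {Ω : Type*} {k : ℕ} (b : Fin k → Ω → Ω) {α θ C : ℝ} {g : Ω → ℝ}

noncomputable def transferOp (g : Ω → ℝ) (x : Ω) : ℝ :=
  (1 / (k : ℝ)) * ∑ j, g (b j x)

/-- The contraction condition of the class `H(α,θ)`. -/
def IsHolderContractionOnAverage [MetricSpace Ω] (α θ : ℝ) : Prop :=
  ∀ y z : Ω, ∃ σ : Equiv.Perm (Fin k),
    (1 / (k : ℝ)) * ∑ j, dist (b j y) (b (σ j) z) ^ α ≤ θ * dist y z ^ α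

/-- `μ` is fixed by the dual of `transferOp b`. -/
def IsTransferInvariant [MeasurableSpace Ω] (μ : Measure Ω) : Prop :=
  (k : ENNReal)⁻¹ • (∑ j, Measure.map (b j) μ) = μ

lemma abs_transferOp_le (hC : 0 ≤ C) (hg : ∀ x, |g x| ≤ C) (x : Ω) :
    |transferOp b g x| ≤ C :=
  calc |transferOp b g x| ≤ (1 / (k : ℝ)) * ∑ j, |g (b j x)| := by
        rw [transferOp, abs_mul, abs_of_nonneg (by positivity)]
        gcongr
        exact Finset.abs_sum_le_sum_abs _ _
    _ ≤ (1 / (k : ℝ)) * ∑ _j : Fin k, C := by gcongr; exact hg _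
    _ ≤ C := by
        rcases eq_or_ne k 0 with rfl | hk
        · simpa using hC
        · simp [field]

lemma abs_transferOp_sub_le [MetricSpace Ω]
    (hcontr : IsHolderContractionOnAverage b α θ)
    (hC : 0 ≤ C) (hg : ∀ x y, |g x - g y| ≤ C * dist x y ^ α) (y z : Ω) :
    |transferOp b g y - transferOp b g z| ≤ θ * C * dist y z ^ α := by
  obtain ⟨σ, hσ⟩ := hcontr y z
  have hk : (0 : ℝ) ≤ 1 / k := by positivity
  calc |transferOp b g y - transferOp b g z|
      = (1 / (k : ℝ)) * |∑ j, (g (b j y) - g (b (σ j) z))| := by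
        rw [transferOp, transferOp, ← Equiv.sum_comp σ (fun j => g (b j z)), ← mul_sub,
          ← Finset.sum_sub_distrib, abs_mul, abs_of_nonneg hk]
    _ ≤ (1 / (k : ℝ)) * ∑ j, C * dist (b j y) (b (σ j) z) ^ α := by
        gcongr
        exact (Finset.abs_sum_le_sum_abs _ _).trans (Finset.sum_le_sum fun j _ => hg _ _)
    _ = C * ((1 / (k : ℝ)) * ∑ j, dist (b j y) (b (σ j) z) ^ α) := by
        rw [← Finset.mul_sum]; ring
    _ ≤ C * (θ * dist y z ^ α) := by gcongr
    _ = θ * C * dist y z ^ α := by ring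

lemma integral_transferOp [TopologicalSpace Ω] [CompactSpace Ω] [MeasurableSpace Ω]
    [OpensMeasurableSpace Ω] {μ : Measure Ω} [IsFiniteMeasure μ] (hb : ∀ j, Measurable (b j))
    (hfix : IsTransferInvariant b μ) (hg : Continuous g) :
    ∫ x, transferOp b g x ∂μ = ∫ x, g x ∂μ := by
  have hint : ∀ j, Integrable g (μ.map (b j)) := fun j =>
    hg.integrable_of_hasCompactSupport (.of_compactSpace g)
  have hint_comp : ∀ j, Integrable (fun x => g (b j x)) μ := fun j =>
    (integrable_map_measure hg.aestronglyMeasurable (hb j).aemeasurable).mp (hint j)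
  conv_rhs => rw [← hfix]
  rw [integral_smul_measure, integral_finsetSum_measure fun j _ => hint j]
  simp only [transferOp, integral_const_mul, integral_finsetSum _ fun j _ => hint_comp j,
    integral_map (hb _).aemeasurable hg.aestronglyMeasurable]
  simp [ENNReal.toReal_inv]

end TransferOperator

/-- The two bounds on `s'` balance at `s = θ * h`, which produces the rate `2θ/(1+θ)`. -/
lemma add_le_two_mul_div_one_add_mul {θ s h s' h' : ℝ} (hθ₀ : 0 ≤ θ) (hθ₁ : θ ≤ 1)
    (hs : s' ≤ s) (hsh : s' ≤ θ * h) (hh : h' ≤ θ * h) :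
    s' + h' ≤ 2 * θ / (1 + θ) * (s + h) := by
  rw [div_mul_eq_mul_div, le_div_iff₀ (by linarith)]
  have hs₁ := mul_le_mul_of_nonneg_right hs (by linarith : 0 ≤ 1 + θ)
  have hsh₁ := mul_le_mul_of_nonneg_right hsh (by linarith : 0 ≤ 1 + θ)
  have hh₁ := mul_le_mul_of_nonneg_right hh (by linarith : 0 ≤ 1 + θ)
  rcases le_total s (θ * h) with hc | hc
  · nlinarith [mul_nonneg (sub_nonneg.2 hθ₁) (sub_nonneg.2 hc)]
  · nlinarith [mul_nonneg hθ₀ (sub_nonneg.2 hc)]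

lemma apply_iterate_le_pow_mul {X : Type*} {P : X → Prop} {N : X → ℝ} {T : X → X} {ρ : ℝ}
    (hρ : 0 ≤ ρ) (hT : ∀ x, P x → P (T x)) (hN : ∀ x, P x → N (T x) ≤ ρ * N x) :
    ∀ n x, P x → N (T^[n] x) ≤ ρ ^ n * N x
  | 0, x, _ => by simp
  | n + 1, x, hx =>
    calc N (T^[n + 1] x) = N (T^[n] (T x)) := by rw [Function.iterate_succ_apply]
      _ ≤ ρ ^ n * N (T x) := apply_iterate_le_pow_mul hρ hT hN n _ (hT x hx)
      _ ≤ ρ ^ n * (ρ * N x) := by gcongr; exact hN x hx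
      _ = ρ ^ (n + 1) * N x := by ring

section SpectralGap

variable {Ω : Type*} [MetricSpace Ω] [CompactSpace Ω] [MeasurableSpace Ω]
  [OpensMeasurableSpace Ω] {μ : Measure Ω} [IsProbabilityMeasure μ] {k : ℕ} {b : Fin k → Ω → Ω}
  {α θ : ℝ} {g : Ω → ℝ}

lemma IsMeanZeroHolder.transferOp (hg : IsMeanZeroHolder μ α g) (hα : 0 < α)
    (hcontr : IsHolderContractionOnAverage b α θ)
    (hb : ∀ j, Measurable (b j)) (hfix : IsTransferInvariant b μ) :
    IsMeanZeroHolder μ α (transferOp b g) := by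
  have hosc := abs_transferOp_sub_le b hcontr holSemi_nonneg (abs_sub_le_holSemi_mul hg.bddAbove)
  refine ⟨continuous_of_abs_sub_le hα hosc, ⟨_, mem_upperBounds_holderQuotients hosc⟩, ?_⟩
  rw [integral_transferOp b hb hfix hg.continuous, hg.integral_eq_zero]

lemma holNorm_transferOp_le (hg : IsMeanZeroHolder μ α g) (hα : 0 < α)
    (hθ₀ : 0 ≤ θ) (hθ₁ : θ ≤ 1)
    (hcontr : IsHolderContractionOnAverage b α θ)
    (hb : ∀ j, Measurable (b j)) (hfix : IsTransferInvariant b μ) :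
    holNorm α (transferOp b g) ≤ 2 * θ / (1 + θ) * holNorm α g := by
  have hD : 0 ≤ Metric.diam (univ : Set Ω) ^ α := Real.rpow_nonneg Metric.diam_nonneg α
  have hosc := abs_transferOp_sub_le b hcontr holSemi_nonneg (abs_sub_le_holSemi_mul hg.bddAbove)
  have hsemi : holSemi α (transferOp b g) ≤ θ * holSemi α g :=
    Real.sSup_le (mem_upperBounds_holderQuotients hosc) (mul_nonneg hθ₀ holSemi_nonneg)
  have hsemi' : Metric.diam (univ : Set Ω) ^ α * holSemi α (transferOp b g) ≤
      θ * (Metric.diam (univ : Set Ω) ^ α * holSemi α g) := by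
    rw [mul_left_comm]
    exact mul_le_mul_of_nonneg_left hsemi hD
  have hsup : supN (transferOp b g) ≤ supN g :=
    supN_le supN_nonneg (abs_transferOp_le b supN_nonneg (abs_le_supN hg.continuous))
  have hsup' : supN (transferOp b g) ≤
      Metric.diam (univ : Set Ω) ^ α * holSemi α (transferOp b g) :=
    (hg.transferOp hα hcontr hb hfix).supN_le_diam_rpow_mul_holSemi hα.le
  exact add_le_two_mul_div_one_add_mul hθ₀ hθ₁ hsup (hsup'.trans hsemi') hsemi'

end SpectralGap

theorem transfer_operator_spectral_gap_general {Ω : Type*} [MetricSpace Ω] [CompactSpace Ω]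
    [MeasurableSpace Ω] [BorelSpace Ω]
    (α θ : ℝ) (hα : α ∈ Set.Ioc (0:ℝ) 1) (hθ : θ ∈ Set.Ioo (0:ℝ) 1)
    (k : ℕ) (b : Fin k → Ω → Ω) (hb : ∀ j, Measurable (b j))
    (hcontr : ∀ y z : Ω, ∃ σ : Equiv.Perm (Fin k),
      (1 / (k : ℝ)) * ∑ j, dist (b j y) (b (σ j) z) ^ α ≤ θ * dist y z ^ α)
    (L : (Ω → ℝ) → (Ω → ℝ))
    (hL : ∀ f x, L f x = (1 / (k : ℝ)) * ∑ j, f (b j x))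
    (μ₀ : Measure Ω) [IsProbabilityMeasure μ₀]
    (hfix : (k : ENNReal)⁻¹ • (∑ j, Measure.map (b j) μ₀) = μ₀) :
    ∀ f : Ω → ℝ, Continuous f →
      BddAbove {r : ℝ | ∃ x y : Ω, x ≠ y ∧ r = |f x - f y| / dist x y ^ α} →
      (∫ x, f x ∂μ₀) = 0 →
      ∀ n : ℕ, holNorm α (L^[n] f) ≤ (2 * θ / (1 + θ)) ^ n * holNorm α f := by
  intro f hf hf_bdd hf_mean n
  obtain rfl : L = transferOp b := funext fun g => funext (hL g)
  have hθ₀ : 0 ≤ θ := hθ.1.le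
  exact apply_iterate_le_pow_mul (P := IsMeanZeroHolder μ₀ α) (by positivity)
    (fun g hg => hg.transferOp hα.1 hcontr hb hfix)
    (fun g hg => holNorm_transferOp_le hg hα.1 hθ₀ hθ.2.le hcontr hb hfix)
    n f ⟨hf, hf_bdd, hf_mean⟩

/-- for `T` of class `H(α,θ)` on a compact space, the zero-potential transfer
operator `L₀ f(x) = (1/k)Σ_j f(b_j x)` has spectral gap of size `(1-θ)/(1+θ)` with constant 1
on the Hölder space: if `μ₀(f) = 0`, then `‖L₀ⁿ f‖ ≤ ((2θ)/(1+θ))ⁿ ‖f‖`, where `μ₀` is the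
unique `L₀*`-fixed probability measure. -/
theorem transfer_operator_spectral_gap {Ω : Type*} [MetricSpace Ω] [CompactSpace Ω]
    [MeasurableSpace Ω] [BorelSpace Ω] [Nonempty Ω]
    (α θ : ℝ) (hα : α ∈ Set.Ioc (0:ℝ) 1) (hθ : θ ∈ Set.Ioo (0:ℝ) 1)
    (k : ℕ) (hk : 2 ≤ k) (b : Fin k → Ω → Ω) (hb : ∀ j, Measurable (b j))
    (hcontr : ∀ y z : Ω, ∃ σ : Equiv.Perm (Fin k),
      (1 / (k : ℝ)) * ∑ j, dist (b j y) (b (σ j) z) ^ α ≤ θ * dist y z ^ α)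
    (L : (Ω → ℝ) → (Ω → ℝ))
    (hL : ∀ f x, L f x = (1 / (k : ℝ)) * ∑ j, f (b j x))
    (μ₀ : Measure Ω) [IsProbabilityMeasure μ₀]
    (hfix : (k : ENNReal)⁻¹ • (∑ j, Measure.map (b j) μ₀) = μ₀) :
    ∀ f : Ω → ℝ, Continuous f →
      BddAbove {r : ℝ | ∃ x y : Ω, x ≠ y ∧ r = |f x - f y| / dist x y ^ α} →
      (∫ x, f x ∂μ₀) = 0 →
      ∀ n : ℕ, holNorm α (L^[n] f) ≤ (2 * θ / (1 + θ)) ^ n * holNorm α f :=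
  transfer_operator_spectral_gap_general α θ hα hθ k b hb hcontr L hL μ₀ hfix
end

section
/- Let T be a map of a compact interval Ω of class V with k monotone inverse branches b_1,...,b_k whose images I_1,...,I_k have pairwise disjoint interiors, and let L₀f(x) = (1/k)Σ_j f(b_j(x)). Then for every f of bounded p-variation, BV_p(L₀f) ≤ k^{-1/p}·BV_p(f). -/
/-!
For a partition `x₀ < ⋯ < xₙ` of `Ω`, the power-mean inequality bounds each
`|L₀f(xᵢ₊₁) - L₀f(xᵢ)|ᵖ` by `(1/k) Σⱼ |f(bⱼ xᵢ₊₁) - f(bⱼ xᵢ)|ᵖ`. The `k·n` open intervals between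
`bⱼ xᵢ` and `bⱼ xᵢ₊₁` are pairwise disjoint: for a fixed branch by monotonicity, for different
branches because they lie in the disjoint interiors of the `Iⱼ`. Increments of `f` across pairwise
disjoint intervals can be chained, from left to right, into a single partition of `Ω`, so their
`p`-th powers add up to at most `BV_p(f)ᵖ`. Altogether the `p`-th power sum of `L₀f` along the
partition is at most `BV_p(f)ᵖ / k`.
-/

open Set

open Function

section LinearOrder

variable {α : Type*} [LinearOrder α]

lemma max_le_min_of_disjoint_uIoo [DenselyOrdered α] {a b c d : α}
    (h : Disjoint (uIoo a b) (uIoo c d)) (hmin : min a b ≤ min c d) (hcd : c ≠ d) :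
    max a b ≤ min c d := by
  rw [uIoo, uIoo, Ioo_disjoint_Ioo, max_eq_right hmin] at h
  exact (min_le_iff.mp h).resolve_right (min_lt_max.mpr hcd).not_ge

lemma uIoo_subset_interior [TopologicalSpace α] [OrderClosedTopology α] {S : Set α}
    (hS : S.OrdConnected) {a b : α} (ha : a ∈ S) (hb : b ∈ S) : uIoo a b ⊆ interior S :=
  interior_maximal (uIoo_subset_uIcc_self.trans (hS.uIcc_subset ha hb)) isOpen_Ioo

lemma pairwise_disjoint_uIoo_succ [DenselyOrdered α] {n : ℕ} {g : Fin (n + 1) → α}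
    (hg : Monotone g ∨ Antitone g) :
    Pairwise (Disjoint on fun i : Fin n => uIoo (g i.castSucc) (g i.succ)) := by
  refine (pairwise_disjoint_on _).mpr fun i i' hii' => ?_
  have hle : i.succ ≤ i'.castSucc := Fin.succ_le_castSucc_iff.mpr hii'
  rcases hg with hg | hg
  · rw [uIoo_of_le (hg i.castSucc_le_succ), uIoo_of_le (hg i'.castSucc_le_succ),
      Ioo_disjoint_Ioo]
    exact min_le_of_left_le ((hg hle).trans (le_max_right _ _))
  · rw [uIoo_of_ge (hg i.castSucc_le_succ), uIoo_of_ge (hg i'.castSucc_le_succ),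
      Ioo_disjoint_Ioo]
    exact min_le_of_right_le ((hg hle).trans (le_max_left _ _))

lemma pairwise_disjoint_uIoo_branches [DenselyOrdered α] [TopologicalSpace α]
    [OrderClosedTopology α] {β κ : Type*} [Preorder β] {Ω : Set β} {b : κ → β → α}
    {I : κ → Set α}
    (hmono : ∀ j, MonotoneOn (b j) Ω ∨ AntitoneOn (b j) Ω) (hmaps : ∀ j, MapsTo (b j) Ω (I j))
    (hI : ∀ j, (I j).OrdConnected) (hdisj : Pairwise (Disjoint on fun j => interior (I j)))
    {n : ℕ} {x : Fin (n + 1) → β} (hx : Monotone x) (hxΩ : ∀ i, x i ∈ Ω) :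
    Pairwise (Disjoint on fun t : κ × Fin n =>
      uIoo (b t.1 (x t.2.castSucc)) (b t.1 (x t.2.succ))) := by
  rintro ⟨j, i⟩ ⟨j', i'⟩ hne
  by_cases hj : j = j'
  · subst hj
    have hbx : Monotone (b j ∘ x) ∨ Antitone (b j ∘ x) :=
      (hmono j).imp (fun hm _ _ h => hm (hxΩ _) (hxΩ _) (hx h))
        (fun hm _ _ h => hm (hxΩ _) (hxΩ _) (hx h))
    exact pairwise_disjoint_uIoo_succ hbx (fun h => hne (congrArg _ h))
  · exact (hdisj hj).mono (uIoo_subset_interior (hI j) (hmaps j (hxΩ _)) (hmaps j (hxΩ _)))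
      (uIoo_subset_interior (hI j') (hmaps j' (hxΩ _)) (hmaps j' (hxΩ _)))

lemma abs_sub_max_min {β : Type*} [AddCommGroup β] [Lattice β] [IsOrderedAddMonoid β]
    (f : α → β) (u v : α) : |f (max u v) - f (min u v)| = |f v - f u| := by
  rcases le_total u v with h | h
  · rw [min_eq_left h, max_eq_right h]
  · rw [min_eq_right h, max_eq_left h, abs_sub_comm]

lemma List.SortedLE.append_pair {l : List α} (hl : l.SortedLE) {u v : α} (hlu : ∀ x ∈ l, x ≤ u)
    (huv : u ≤ v) : (l ++ [u, v]).SortedLE := by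
  rw [List.sortedLE_iff_pairwise] at hl ⊢
  refine List.pairwise_append.mpr ⟨hl, by simpa using huv, fun x hx y hy => ?_⟩
  simp only [List.mem_cons, List.not_mem_nil, or_false] at hy
  rcases hy with rfl | rfl
  exacts [hlu x hx, (hlu x hx).trans huv]

end LinearOrder

noncomputable def pVarSum (p : ℝ) (f : ℝ → ℝ) : List ℝ → ℝ
  | x :: y :: l => |f y - f x| ^ p + pVarSum p f (y :: l)
  | _ => 0

section pVarSum

variable {p : ℝ} {f : ℝ → ℝ}

lemma pVarSum_nonneg : ∀ l, 0 ≤ pVarSum p f l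
  | _ :: y :: l => add_nonneg (Real.rpow_nonneg (abs_nonneg _) p) (pVarSum_nonneg (y :: l))
  | [_] | [] => le_rfl

lemma add_le_pVarSum_append_pair (l : List ℝ) (u v : ℝ) :
    pVarSum p f l + |f v - f u| ^ p ≤ pVarSum p f (l ++ [u, v]) := by
  induction l with
  | nil => simp [pVarSum]
  | cons x t ih =>
    cases t with
    | nil =>
      simp only [List.nil_append, List.cons_append, pVarSum, zero_add, add_zero]
      exact le_add_of_nonneg_left (Real.rpow_nonneg (abs_nonneg _) p)
    | cons y t => simpa [pVarSum, add_assoc] using ih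

lemma pVarSum_cons_eq_sum (x₀ : ℝ) (t : List ℝ) :
    pVarSum p f (x₀ :: t) = ∑ j : Fin t.length,
      |f ((x₀ :: t).get j.succ) - f ((x₀ :: t).get j.castSucc)| ^ p := by
  induction t generalizing x₀ with
  | nil => simp [pVarSum]
  | cons y t ih => simp [pVarSum, Fin.sum_univ_succ, ih]

lemma exists_sortedLT_cons_pVarSum_eq (hp : p ≠ 0) (x : ℝ) (t : List ℝ)
    (hxt : (x :: t).SortedLE) :
    ∃ r : List ℝ, (x :: r).SortedLT ∧ r ⊆ t ∧
      pVarSum p f (x :: r) = pVarSum p f (x :: t) := by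
  induction t generalizing x with
  | nil => exact ⟨[], by simp [List.sortedLT_iff_pairwise], List.nil_subset _, rfl⟩
  | cons y t ih =>
    rw [List.sortedLE_iff_pairwise, List.pairwise_cons] at hxt
    obtain ⟨hx, hyt⟩ := hxt
    obtain ⟨r, hyr, hrt, hsum⟩ := ih y hyt.sortedLE
    obtain rfl | hxy := (hx y List.mem_cons_self).eq_or_lt
    · exact ⟨r, hyr, List.subset_cons_of_subset _ hrt, by simp [pVarSum, hsum, hp]⟩
    refine ⟨y :: r, ?_, List.cons_subset_cons y hrt, by simp [pVarSum, hsum]⟩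
    rw [List.sortedLT_iff_pairwise] at hyr ⊢
    refine List.pairwise_cons.mpr ⟨fun z hz => ?_, hyr⟩
    rcases List.mem_cons.mp hz with rfl | hz
    exacts [hxy, hxy.trans_le ((List.pairwise_cons.mp hyt).1 z (hrt hz))]

lemma exists_sortedLE_sum_le_pVarSum {ι : Type*} (hp : p ≠ 0) (s : Finset ι) (u v : ι → ℝ)
    (hdisj : (s : Set ι).PairwiseDisjoint fun t => uIoo (u t) (v t)) :
    ∃ l : List ℝ, l.SortedLE ∧ (∀ x ∈ l, ∃ t ∈ s, x = u t ∨ x = v t) ∧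
      ∑ t ∈ s, |f (v t) - f (u t)| ^ p ≤ pVarSum p f l := by
  classical
  induction s using Finset.induction_on_max_value (fun t => min (u t) (v t)) with
  | empty => exact ⟨[], by simp [List.SortedLE, Monotone], by simp, by simp [pVarSum]⟩
  | insert a s has hmax ih =>
    obtain ⟨l, hl, hls, hsum⟩ := ih (hdisj.subset (by simp))
    rw [Finset.sum_insert has]
    by_cases hauv : u a = v a
    -- a degenerate interval may lie inside an earlier one, so it is skipped, not appended
    · exact ⟨l, hl, fun x hx => (Finset.exists_mem_insert _ _ _).mpr (Or.inr (hls x hx)),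
        by simpa [hauv, hp] using hsum⟩
    have hle : ∀ x ∈ l, x ≤ min (u a) (v a) := by
      intro x hx
      obtain ⟨t, ht, hxt⟩ := hls x hx
      have hta : max (u t) (v t) ≤ min (u a) (v a) :=
        max_le_min_of_disjoint_uIoo (hdisj (by simp [ht]) (by simp) (ne_of_mem_of_not_mem ht has))
          (hmax t ht) hauv
      rcases hxt with rfl | rfl
      exacts [(le_max_left _ _).trans hta, (le_max_right _ _).trans hta]
    refine ⟨l ++ [min (u a) (v a), max (u a) (v a)], ?_, ?_, ?_⟩
    · exact hl.append_pair hle min_le_max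
    · intro x hx
      rw [Finset.exists_mem_insert]
      simp only [List.mem_append, List.mem_cons, List.not_mem_nil, or_false] at hx
      rcases hx with hx | rfl | rfl
      exacts [Or.inr (hls x hx), Or.inl (min_choice _ _), Or.inl (max_choice _ _)]
    · calc |f (v a) - f (u a)| ^ p + ∑ t ∈ s, |f (v t) - f (u t)| ^ p
          ≤ pVarSum p f l + |f (max (u a) (v a)) - f (min (u a) (v a))| ^ p := by
            rw [abs_sub_max_min]; linarith
        _ ≤ pVarSum p f (l ++ [min (u a) (v a), max (u a) (v a)]) :=
          add_le_pVarSum_append_pair l _ _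

end pVarSum

section BVp

variable {p : ℝ} {f : ℝ → ℝ} {Ω : Set ℝ}

lemma BVp_nonneg : 0 ≤ BVp p f Ω :=
  Real.sSup_nonneg fun _ ⟨_, _, _, _, hr⟩ =>
    hr ▸ Real.rpow_nonneg (Finset.sum_nonneg fun _ _ => Real.rpow_nonneg (abs_nonneg _) p) _

lemma BVp_le_of_sum_rpow_le (hp : 0 < p) {C : ℝ} (hC : 0 ≤ C)
    (h : ∀ n (x : Fin (n + 1) → ℝ), StrictMono x → (∀ i, x i ∈ Ω) →
      ∑ j : Fin n, |f (x j.succ) - f (x j.castSucc)| ^ p ≤ C ^ p) :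
    BVp p f Ω ≤ C := by
  refine Real.sSup_le ?_ hC
  rintro _ ⟨n, x, hx, hxΩ, rfl⟩
  calc (∑ j : Fin n, |f (x j.succ) - f (x j.castSucc)| ^ p) ^ (1 / p)
      ≤ (C ^ p) ^ (1 / p) := by
        gcongr
        exact h n x hx hxΩ
    _ = C := by rw [one_div, Real.rpow_rpow_inv hC hp.ne']

lemma pVarSum_le_BVp_rpow (hp : 0 < p) (hbv : BddAbove (pVarSet p f Ω)) {l : List ℝ}
    (hl : l.SortedLE) (hlΩ : ∀ x ∈ l, x ∈ Ω) : pVarSum p f l ≤ BVp p f Ω ^ p := by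
  rcases l with _ | ⟨x, t⟩
  · exact Real.rpow_nonneg BVp_nonneg p
  obtain ⟨r, hr, hrt, hsum⟩ := exists_sortedLT_cons_pVarSum_eq (f := f) hp.ne' x t hl
  have hmem : pVarSum p f (x :: r) ^ (1 / p) ∈ pVarSet p f Ω := by
    refine ⟨r.length, (x :: r).get, hr.strictMono_get, fun i => hlΩ _ ?_, by
      rw [pVarSum_cons_eq_sum]⟩
    exact List.cons_subset_cons x hrt (List.get_mem (x :: r) i)
  calc pVarSum p f (x :: t) = (pVarSum p f (x :: r) ^ (1 / p)) ^ p := by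
        rw [← hsum, one_div, Real.rpow_inv_rpow (pVarSum_nonneg _) hp.ne']
    _ ≤ BVp p f Ω ^ p :=
        Real.rpow_le_rpow (Real.rpow_nonneg (pVarSum_nonneg _) _) (le_csSup hbv hmem) hp.le

lemma sum_rpow_le_BVp_rpow_of_pairwiseDisjoint {ι : Type*} (hp : 0 < p)
    (hbv : BddAbove (pVarSet p f Ω)) (s : Finset ι) (u v : ι → ℝ) (hu : ∀ t ∈ s, u t ∈ Ω)
    (hv : ∀ t ∈ s, v t ∈ Ω) (hdisj : (s : Set ι).PairwiseDisjoint fun t => uIoo (u t) (v t)) :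
    ∑ t ∈ s, |f (v t) - f (u t)| ^ p ≤ BVp p f Ω ^ p := by
  obtain ⟨l, hl, hls, hsum⟩ := exists_sortedLE_sum_le_pVarSum (f := f) hp.ne' s u v hdisj
  refine hsum.trans (pVarSum_le_BVp_rpow hp hbv hl fun x hx => ?_)
  obtain ⟨t, ht, rfl | rfl⟩ := hls x hx
  exacts [hu t ht, hv t ht]

end BVp

lemma abs_mean_sub_mean_rpow_le {ι : Type*} {s : Finset ι} (hs : s.Nonempty) {p : ℝ}
    (hp : 1 ≤ p) (z w : ι → ℝ) :
    |1 / (s.card : ℝ) * ∑ i ∈ s, z i - 1 / (s.card : ℝ) * ∑ i ∈ s, w i| ^ p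
      ≤ 1 / (s.card : ℝ) * ∑ i ∈ s, |z i - w i| ^ p := by
  have hw : ∑ _i ∈ s, 1 / (s.card : ℝ) = 1 := by
    rw [Finset.sum_const, nsmul_eq_mul]; field_simp [hs.card_pos.ne']
  calc |1 / (s.card : ℝ) * ∑ i ∈ s, z i - 1 / (s.card : ℝ) * ∑ i ∈ s, w i| ^ p
      ≤ (∑ i ∈ s, 1 / (s.card : ℝ) * |z i - w i|) ^ p := by
        gcongr
        rw [← mul_sub, ← Finset.sum_sub_distrib, ← Finset.mul_sum, abs_mul,
          abs_of_nonneg (by positivity)]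
        gcongr
        exact Finset.abs_sum_le_sum_abs _ _
    _ ≤ ∑ i ∈ s, 1 / (s.card : ℝ) * |z i - w i| ^ p :=
        Real.rpow_arith_mean_le_arith_mean_rpow s _ _ (fun _ _ => by positivity) hw
          (fun _ _ => abs_nonneg _) hp
    _ = 1 / (s.card : ℝ) * ∑ i ∈ s, |z i - w i| ^ p := by rw [Finset.mul_sum]

theorem bvp_transfer_contraction_general (p : ℝ) (hp : 1 ≤ p)
    (a c : ℝ)
    (k : ℕ) (hk : 2 ≤ k) (b : Fin k → ℝ → ℝ) (I : Fin k → Set ℝ)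
    (hmono : ∀ j, MonotoneOn (b j) (Set.Icc a c) ∨ AntitoneOn (b j) (Set.Icc a c))
    (hmaps : ∀ j, Set.MapsTo (b j) (Set.Icc a c) (I j))
    (hIsub : ∀ j, I j ⊆ Set.Icc a c)
    (hIint : ∀ j, (I j).OrdConnected)
    (hdisj : ∀ i j, i ≠ j → interior (I i) ∩ interior (I j) = ∅)
    (f : ℝ → ℝ) (hbv : BddAbove (pVarSet p f (Set.Icc a c))) :
    BVp p (fun x => (1 / (k : ℝ)) * ∑ j, f (b j x)) (Set.Icc a c) ≤
      (k : ℝ) ^ (-(1 / p)) * BVp p f (Set.Icc a c) := by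
  have hp0 : 0 < p := by linarith
  have hk0 : (0 : ℝ) < k := by norm_cast; omega
  have : NeZero k := ⟨by omega⟩
  have hB := BVp_nonneg (p := p) (f := f) (Ω := Icc a c)
  refine BVp_le_of_sum_rpow_le hp0 (by positivity) fun n x hx hxΩ => ?_
  have hdisjoint := pairwise_disjoint_uIoo_branches hmono hmaps hIint
    (fun i j h => disjoint_iff_inter_eq_empty.mpr (hdisj i j h)) hx.monotone hxΩ
  calc _ ≤ ∑ i : Fin n, 1 / (k : ℝ) * ∑ j, |f (b j (x i.succ)) - f (b j (x i.castSucc))| ^ p :=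
        Finset.sum_le_sum fun i _ => by
          simpa using abs_mean_sub_mean_rpow_le Finset.univ_nonempty hp
            (fun j => f (b j (x i.succ))) (fun j => f (b j (x i.castSucc)))
    _ = 1 / (k : ℝ) * ∑ t : Fin k × Fin n,
          |f (b t.1 (x t.2.succ)) - f (b t.1 (x t.2.castSucc))| ^ p := by
        rw [← Finset.mul_sum, Fintype.sum_prod_type, Finset.sum_comm]
    _ ≤ 1 / (k : ℝ) * BVp p f (Icc a c) ^ p := by
        gcongr
        exact sum_rpow_le_BVp_rpow_of_pairwiseDisjoint hp0 hbv Finset.univ _ _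
          (fun t _ => hIsub _ (hmaps _ (hxΩ _))) (fun t _ => hIsub _ (hmaps _ (hxΩ _)))
          (hdisjoint.set_pairwise _)
    _ = ((k : ℝ) ^ (-(1 / p)) * BVp p f (Icc a c)) ^ p := by
        rw [Real.mul_rpow (by positivity) hB, ← Real.rpow_mul hk0.le, neg_mul,
          one_div_mul_cancel hp0.ne', Real.rpow_neg_one, one_div]

/-- for a map of class `V` of a compact interval `Ω = [a,b]`, with `k` monotone
inverse branches `b_j : Ω → I_j` whose images have pairwise disjoint interiors, the operator
`L₀f(x) = (1/k)Σ_j f(b_j x)` satisfies `BV_p(L₀f) ≤ k^{-1/p}·BV_p(f)`. -/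
theorem bvp_transfer_contraction (p : ℝ) (hp : 1 ≤ p)
    (a c : ℝ) (hac : a < c)
    (k : ℕ) (hk : 2 ≤ k) (b : Fin k → ℝ → ℝ) (I : Fin k → Set ℝ)
    (hmono : ∀ j, MonotoneOn (b j) (Set.Icc a c) ∨ AntitoneOn (b j) (Set.Icc a c))
    (hmaps : ∀ j, Set.MapsTo (b j) (Set.Icc a c) (I j))
    (hIsub : ∀ j, I j ⊆ Set.Icc a c)
    (hIint : ∀ j, (I j).OrdConnected)
    (hdisj : ∀ i j, i ≠ j → interior (I i) ∩ interior (I j) = ∅)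
    (f : ℝ → ℝ) (hbv : BddAbove (pVarSet p f (Set.Icc a c))) :
    BVp p (fun x => (1 / (k : ℝ)) * ∑ j, f (b j x)) (Set.Icc a c) ≤
      (k : ℝ) ^ (-(1 / p)) * BVp p f (Set.Icc a c) :=
  bvp_transfer_contraction_general p hp a c k hk b I hmono hmaps hIsub hIint hdisj f hbv
end

section
/- Let X be a real Banach space, L a bounded operator with spectral gap SG1: eigenvalue λ > 0, eigenvector u₀, closed invariant complement G with ‖Lⁿ|_G‖ ≤ Cλⁿ(1-δ)ⁿ. Let P be an 'open positive cone' in X (stable under positive scalar multiplication, open in the subspace it generates, and with closure(P) ∩ (-P) = ∅) preserved by L and containing u₀. Then G ∩ P = ∅, and the dual eigenform φ₀ (the functional with kernel G and φ₀(u₀) = 1) satisfies φ₀(u) > 0 for all u ∈ P. -/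
open Set

/-- let `L` have a spectral gap SG1 with eigenvalue `λ > 0`, eigenvector `u₀`
and closed invariant complement `G`, and let `P` be an open positive cone (stable under
positive scalars, open in the subspace it generates, with `closure P ∩ (-P) = ∅`) preserved
by `L` and containing `u₀`. Then `G ∩ P = ∅` and the eigenform `φ₀` (vanishing on `G`, with
`φ₀(u₀) = 1`) is positive on `P`. -/
theorem cone_duality_eigenform_positive {X : Type*} [NormedAddCommGroup X]
    [NormedSpace ℝ X] [CompleteSpace X]
    (L : X →L[ℝ] X) (lam : ℝ) (hlam : 0 < lam) (u₀ : X) (hu₀ : u₀ ≠ 0)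
    (heig : L u₀ = lam • u₀)
    (G : Submodule ℝ X) (hGclosed : IsClosed (G : Set X))
    (hcompl : IsCompl (Submodule.span ℝ {u₀}) G)
    (hGinv : ∀ x ∈ G, L x ∈ G)
    (C δ : ℝ) (hC : 0 < C) (hδ : δ ∈ Set.Ioo (0:ℝ) 1)
    (hgap : ∀ n : ℕ, ∀ x ∈ G, ‖(L ^ n) x‖ ≤ C * lam ^ n * (1 - δ) ^ n * ‖x‖)
    (P : Set X)
    (hscal : ∀ c : ℝ, 0 < c → ∀ u ∈ P, c • u ∈ P)
    (hopen : IsOpen ((fun v : Submodule.span ℝ P => (v : X)) ⁻¹' P))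
    (hsep : closure P ∩ {x : X | -x ∈ P} = ∅)
    (hLP : ∀ u ∈ P, L u ∈ P) (hu₀P : u₀ ∈ P)
    (φ₀ : X →L[ℝ] ℝ) (hker : ∀ g ∈ G, φ₀ g = 0) (hnorm : φ₀ u₀ = 1) :
    ((G : Set X) ∩ P = ∅) ∧ ∀ u ∈ P, 0 < φ₀ u := by
  have hδ0 := hδ.1
  have hδ1 := hδ.2
  -- powers of L on u₀
  have hpowu₀ : ∀ n : ℕ, (L ^ n) u₀ = lam ^ n • u₀ := by
    intro n
    induction n with
    | zero => simp
    | succ n ih =>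
      rw [pow_succ', ContinuousLinearMap.mul_apply, ih, map_smul, heig, smul_smul,
        ← pow_succ]
  -- Step A: φ₀ is nonnegative on P
  have stepA : ∀ u ∈ P, 0 ≤ φ₀ u := by
    intro u hu
    by_contra hneg
    push_neg at hneg
    have humem : u ∈ Submodule.span ℝ {u₀} ⊔ G := by
      rw [hcompl.sup_eq_top]; trivial
    obtain ⟨y, hy, z, hz, hyz⟩ := Submodule.mem_sup.mp humem
    obtain ⟨c, hc⟩ := Submodule.mem_span_singleton.mp hy
    have hφ : φ₀ u = c := by
      rw [← hyz, map_add, ← hc, map_smul, hker z hz]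
      simp [hnorm]
    -- iterates stay in P
    have hLn : ∀ n : ℕ, (L ^ n) u ∈ P := by
      intro n
      induction n with
      | zero => simpa using hu
      | succ n ih =>
        have h1 : (L ^ (n + 1)) u = L ((L ^ n) u) := by
          rw [pow_succ', ContinuousLinearMap.mul_apply]
        rw [h1]
        exact hLP _ ih
    have hPn : ∀ n : ℕ, (lam⁻¹) ^ n • ((L ^ n) u) ∈ P := fun n =>
      hscal _ (pow_pos (inv_pos.mpr hlam) n) _ (hLn n)
    -- identify the limit
    have hinv : ∀ n : ℕ, (lam⁻¹) ^ n * lam ^ n = 1 := by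
      intro n
      rw [← mul_pow, inv_mul_cancel₀ (ne_of_gt hlam), one_pow]
    have hdecomp : ∀ n : ℕ,
        (lam⁻¹) ^ n • ((L ^ n) u) = c • u₀ + (lam⁻¹) ^ n • ((L ^ n) z) := by
      intro n
      have key : (lam⁻¹) ^ n • (c • (lam ^ n • u₀)) = c • u₀ := by
        rw [smul_smul, smul_smul,
          show lam⁻¹ ^ n * c * lam ^ n = c * (lam⁻¹ ^ n * lam ^ n) by ring, hinv, mul_one]
      rw [← hyz, ← hc, map_add, map_smul, hpowu₀, smul_add, key]
    have hzn : Filter.Tendsto (fun n : ℕ => (lam⁻¹) ^ n • ((L ^ n) z))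
        Filter.atTop (nhds 0) := by
      have hb : ∀ n : ℕ, ‖(lam⁻¹) ^ n • ((L ^ n) z)‖ ≤ (C * ‖z‖) * (1 - δ) ^ n := by
        intro n
        rw [norm_smul]
        have h1 : ‖(lam⁻¹ : ℝ) ^ n‖ = (lam⁻¹) ^ n := by
          rw [Real.norm_eq_abs, abs_of_nonneg (pow_nonneg (inv_nonneg.mpr hlam.le) n)]
        rw [h1]
        calc (lam⁻¹) ^ n * ‖(L ^ n) z‖
            ≤ (lam⁻¹) ^ n * (C * lam ^ n * (1 - δ) ^ n * ‖z‖) := by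
              exact mul_le_mul_of_nonneg_left (hgap n z hz)
                (pow_nonneg (inv_nonneg.mpr hlam.le) n)
          _ = (lam⁻¹ ^ n * lam ^ n) * ((C * ‖z‖) * (1 - δ) ^ n) := by ring
          _ = (C * ‖z‖) * (1 - δ) ^ n := by rw [hinv, one_mul]
      have hlim : Filter.Tendsto (fun n : ℕ => (C * ‖z‖) * (1 - δ) ^ n)
          Filter.atTop (nhds 0) := by
        rw [show (0:ℝ) = (C * ‖z‖) * 0 by ring]
        exact (tendsto_pow_atTop_nhds_zero_of_lt_one (by linarith) (by linarith)).const_mul _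
      exact squeeze_zero_norm hb hlim
    have htend : Filter.Tendsto (fun n : ℕ => (lam⁻¹) ^ n • ((L ^ n) u))
        Filter.atTop (nhds (c • u₀)) := by
      simp only [hdecomp]
      have := (tendsto_const_nhds (x := c • u₀) (f := Filter.atTop (α := ℕ))).add hzn
      simpa using this
    have hcl : c • u₀ ∈ closure P :=
      mem_closure_of_tendsto htend (Filter.Eventually.of_forall hPn)
    have hmem : c • u₀ ∈ closure P ∩ {x : X | -x ∈ P} := by
      refine ⟨hcl, ?_⟩
      show -(c • u₀) ∈ P
      rw [← neg_smul]
      exact hscal (-c) (by rw [hφ] at hneg; linarith) u₀ hu₀P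
    rw [hsep] at hmem
    exact hmem
  -- Step B: φ₀ is positive on P (perturbation using openness)
  have stepB : ∀ u ∈ P, 0 < φ₀ u := by
    intro u hu
    set W := Submodule.span ℝ P with hW
    have huW : u ∈ W := Submodule.subset_span hu
    have hu₀W : u₀ ∈ W := Submodule.subset_span hu₀P
    set f : ℝ → W := fun t => (⟨u, huW⟩ : W) - t • (⟨u₀, hu₀W⟩ : W) with hf
    have hfc : Continuous f := by
      exact continuous_const.sub (continuous_id.smul continuous_const)
    have h0 : f 0 ∈ (fun v : W => (v : X)) ⁻¹' P := by
      simp only [hf, zero_smul, sub_zero]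
      simpa using hu
    have hnb : f ⁻¹' ((fun v : W => (v : X)) ⁻¹' P) ∈ nhds (0 : ℝ) :=
      hfc.continuousAt.preimage_mem_nhds (hopen.mem_nhds h0)
    obtain ⟨ε, hε, hball⟩ := Metric.mem_nhds_iff.mp hnb
    have htmem : f (ε / 2) ∈ (fun v : W => (v : X)) ⁻¹' P := by
      apply hball
      rw [Metric.mem_ball, Real.dist_eq, sub_zero, abs_of_pos (by linarith : (0:ℝ) < ε / 2)]
      linarith
    have hP' : u - (ε / 2) • u₀ ∈ P := by
      simpa [hf] using htmem
    have := stepA _ hP'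
    rw [map_sub, map_smul] at this
    simp only [hnorm, smul_eq_mul, mul_one] at this
    linarith
  constructor
  · ext x
    simp only [mem_inter_iff, mem_empty_iff_false, iff_false, not_and]
    intro hxG hxP
    have := stepB x hxP
    rw [hker x hxG] at this
    exact lt_irrefl 0 this
  · exact stepB
end
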